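/- arXiv:math/9805070 — 2 statements merged into one kernel-verified Lean document; each statement's English description precedes it below -/
import Mathlib

section
/- The sequence (α(n))_{n≥1} is strictly increasing: for every integer n ≥ 1, α(n+1) > α(n). -/
set_option maxHeartbeats 1600000

open Real

/-- `I n a = ∫₀^a ∏_{k ∈ {0,…,n}, k ≠ a} (k² − x²) dx`. -/
noncomputable def I (n a : ℕ) : ℝ :=
  ∫ x in (0:ℝ)..(a:ℝ), ∏ k ∈ (Finset.range (n+1)).erase a, ((k:ℝ)^2 - x^2)

/-- `C n = (4π)^{-(n+1/2)} / Γ(n+1/2)`. -/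
noncomputable def C (n : ℕ) : ℝ :=
  (4*π) ^ (-((n:ℝ) + 1/2)) / Real.Gamma ((n:ℝ) + 1/2)

/-- `α n = 4π C n Σ_{j=0}^{n-1} (2n choose j) |I(n, n-j)|`. -/
noncomputable def α (n : ℕ) : ℝ :=
  4*π * C n * ∑ j ∈ Finset.range n, ((2*n).choose j : ℝ) * |I n (n - j)|

/-- `f n a r t = (t+r)/((a+t+r)(a−t−r)) · ∏_{k=−n+r}^{n+r} (t+k)`. -/
noncomputable def f (n a r : ℕ) (t : ℝ) : ℝ :=
  ((t + r) / (((a:ℝ) + t + r) * ((a:ℝ) - t - r))) *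
    ∏ k ∈ Finset.range (2*n+1), (t + ((k:ℝ) - n + r))

open Finset intervalIntegral

noncomputable def P (n a : ℕ) (x : ℝ) : ℝ :=
  ∏ k ∈ (Finset.range (n+1)).erase a, ((k:ℝ)^2 - x^2)

lemma P_cont (n a : ℕ) : Continuous (P n a) :=
  continuous_finset_prod _ fun _ _ => continuous_const.sub (continuous_pow 2)

noncomputable def K (n a r : ℕ) : ℝ :=
  ∫ x in (r:ℝ)..((r:ℝ)+1), (-1:ℝ)^(r+1) * P n a x

noncomputable def T (n a m : ℕ) : ℝ :=
  ∑ r ∈ Finset.range m, ∫ x in (r:ℝ)..((r:ℝ)+1), P n a x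

lemma P_split {n a r : ℕ} (hra : r < a) (han : a ≤ n) (x : ℝ) :
    (-1:ℝ)^(r+1) * P n a x =
      (∏ k ∈ Finset.range (r+1), (x^2 - (k:ℝ)^2)) *
      (∏ k ∈ (Finset.Ico (r+1) (n+1)).erase a, ((k:ℝ)^2 - x^2)) := by
  have hsplit : (Finset.range (n+1)).erase a =
      Finset.range (r+1) ∪ (Finset.Ico (r+1) (n+1)).erase a := by
    ext k
    simp only [Finset.mem_erase, Finset.mem_range, Finset.mem_union, Finset.mem_Ico]
    omega
  have hdisj : Disjoint (Finset.range (r+1)) ((Finset.Ico (r+1) (n+1)).erase a) := by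
    rw [Finset.disjoint_left]
    intro k hk hk'
    simp only [Finset.mem_range] at hk
    simp only [Finset.mem_erase, Finset.mem_Ico] at hk'
    omega
  rw [P, hsplit, Finset.prod_union hdisj]
  have h1 : ∏ k ∈ Finset.range (r+1), ((k:ℝ)^2 - x^2)
      = (-1:ℝ)^(r+1) * ∏ k ∈ Finset.range (r+1), (x^2 - (k:ℝ)^2) := by
    calc ∏ k ∈ Finset.range (r+1), ((k:ℝ)^2 - x^2)
        = ∏ k ∈ Finset.range (r+1), ((-1) * (x^2 - (k:ℝ)^2)) :=
          Finset.prod_congr rfl (fun k _ => by ring)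
      _ = (-1:ℝ)^(r+1) * ∏ k ∈ Finset.range (r+1), (x^2 - (k:ℝ)^2) := by
          rw [Finset.prod_mul_distrib, Finset.prod_const, Finset.card_range]
  rw [h1]
  have : (-1:ℝ)^(r+1) * (-1:ℝ)^(r+1) = 1 := by
    rw [← pow_add]
    exact Even.neg_one_pow ⟨r+1, by ring⟩
  calc (-1:ℝ)^(r+1) * ((-1:ℝ)^(r+1) * (∏ k ∈ Finset.range (r+1), (x^2 - (k:ℝ)^2)) *
        ∏ k ∈ (Finset.Ico (r+1) (n+1)).erase a, ((k:ℝ)^2 - x^2))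
      = ((-1:ℝ)^(r+1) * (-1:ℝ)^(r+1)) * ((∏ k ∈ Finset.range (r+1), (x^2 - (k:ℝ)^2)) *
        ∏ k ∈ (Finset.Ico (r+1) (n+1)).erase a, ((k:ℝ)^2 - x^2)) := by ring
    _ = _ := by rw [this, one_mul]

lemma P_nonneg {n a r : ℕ} (hra : r < a) (han : a ≤ n) {x : ℝ}
    (hx : x ∈ Set.Icc (r:ℝ) ((r:ℝ)+1)) : 0 ≤ (-1:ℝ)^(r+1) * P n a x := by
  rw [P_split hra han]
  apply mul_nonneg
  · apply Finset.prod_nonneg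
    intro k hk
    simp only [Finset.mem_range] at hk
    have hk' : (k:ℝ) ≤ x := le_trans (by exact_mod_cast Nat.cast_le.2 (by omega : k ≤ r)) hx.1
    have : (k:ℝ)^2 ≤ x^2 := by nlinarith [k.cast_nonneg (α := ℝ)]
    linarith
  · apply Finset.prod_nonneg
    intro k hk
    simp only [Finset.mem_erase, Finset.mem_Ico] at hk
    have hk' : x ≤ (k:ℝ) := le_trans hx.2 (by exact_mod_cast Nat.cast_le.2 (by omega : r+1 ≤ k))
    have hx0 : (0:ℝ) ≤ x := le_trans (r.cast_nonneg) hx.1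
    nlinarith

lemma P_pos {n a r : ℕ} (hra : r < a) (han : a ≤ n) {x : ℝ}
    (hx : x ∈ Set.Ioo (r:ℝ) ((r:ℝ)+1)) : 0 < (-1:ℝ)^(r+1) * P n a x := by
  rw [P_split hra han]
  apply mul_pos
  · apply Finset.prod_pos
    intro k hk
    simp only [Finset.mem_range] at hk
    have hk' : (k:ℝ) < x := lt_of_le_of_lt (by exact_mod_cast Nat.cast_le.2 (by omega : k ≤ r)) hx.1
    have : (k:ℝ)^2 < x^2 := by nlinarith [k.cast_nonneg (α := ℝ)]
    linarith
  · apply Finset.prod_pos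
    intro k hk
    simp only [Finset.mem_erase, Finset.mem_Ico] at hk
    have hk' : x < (k:ℝ) := lt_of_lt_of_le hx.2 (by exact_mod_cast Nat.cast_le.2 (by omega : r+1 ≤ k))
    have hx0 : (0:ℝ) < x := lt_of_le_of_lt (r.cast_nonneg) hx.1
    nlinarith

lemma Qident (n : ℕ) (x : ℝ) :
    x * ((n:ℝ) - x) * ∏ k ∈ Finset.range (n+1), ((k:ℝ)^2 - (x+1)^2) =
    -((x+1) * ((n:ℝ)+1+x)) * ∏ k ∈ Finset.range (n+1), ((k:ℝ)^2 - x^2) := by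
  have prodsplit : ∀ y : ℝ, ∏ k ∈ Finset.range (n+1), ((k:ℝ)^2 - y^2)
      = (∏ k ∈ Finset.range (n+1), ((k:ℝ) - y)) * (∏ k ∈ Finset.range (n+1), ((k:ℝ) + y)) := by
    intro y
    rw [← Finset.prod_mul_distrib]
    exact Finset.prod_congr rfl fun k _ => by ring
  have hA : ((n:ℝ) - x) * ∏ k ∈ Finset.range (n+1), ((k:ℝ) - (x+1))
      = (-1-x) * ∏ k ∈ Finset.range (n+1), ((k:ℝ) - x) := by
    rw [Finset.prod_range_succ' (fun k => ((k:ℝ) - (x+1))) n,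
        Finset.prod_range_succ (fun k => ((k:ℝ) - x)) n]
    have he : ∏ k ∈ Finset.range n, (((k+1 : ℕ):ℝ) - (x+1)) = ∏ k ∈ Finset.range n, ((k:ℝ) - x) :=
      Finset.prod_congr rfl fun k _ => by push_cast; ring
    rw [he]
    push_cast
    ring
  have hB : x * ∏ k ∈ Finset.range (n+1), ((k:ℝ) + (x+1))
      = ((n:ℝ)+1+x) * ∏ k ∈ Finset.range (n+1), ((k:ℝ) + x) := by
    rw [Finset.prod_range_succ (fun k => ((k:ℝ) + (x+1))) n,
        Finset.prod_range_succ' (fun k => ((k:ℝ) + x)) n]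
    have he : ∏ k ∈ Finset.range n, (((k+1 : ℕ):ℝ) + x) = ∏ k ∈ Finset.range n, ((k:ℝ) + (x+1)) :=
      Finset.prod_congr rfl fun k _ => by push_cast; ring
    rw [he]
    push_cast
    ring
  rw [prodsplit (x+1), prodsplit x]
  calc x * ((n:ℝ) - x) * ((∏ k ∈ Finset.range (n+1), ((k:ℝ) - (x+1))) *
        ∏ k ∈ Finset.range (n+1), ((k:ℝ) + (x+1)))
      = (((n:ℝ) - x) * ∏ k ∈ Finset.range (n+1), ((k:ℝ) - (x+1))) *
        (x * ∏ k ∈ Finset.range (n+1), ((k:ℝ) + (x+1))) := by ring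
    _ = ((-1-x) * ∏ k ∈ Finset.range (n+1), ((k:ℝ) - x)) *
        (((n:ℝ)+1+x) * ∏ k ∈ Finset.range (n+1), ((k:ℝ) + x)) := by rw [hA, hB]
    _ = _ := by ring

lemma Pident {n a : ℕ} (han : a ≤ n) (x : ℝ) :
    x * ((n:ℝ) - x) * ((a:ℝ)^2 - (x+1)^2) * P n a (x+1) =
    -((x+1) * ((n:ℝ)+1+x) * ((a:ℝ)^2 - x^2)) * P n a x := by
  have hmem : a ∈ Finset.range (n+1) := Finset.mem_range.2 (by omega)
  have h1 := Finset.mul_prod_erase (Finset.range (n+1)) (fun k => ((k:ℝ)^2 - (x+1)^2)) hmem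
  have h2 := Finset.mul_prod_erase (Finset.range (n+1)) (fun k => ((k:ℝ)^2 - x^2)) hmem
  have hq := Qident n x
  rw [← h1, ← h2] at hq
  simp only [P]
  linear_combination hq

lemma Psucc {n a : ℕ} (han : a ≤ n) (x : ℝ) :
    P (n+1) a x = (((n:ℝ)+1)^2 - x^2) * P n a x := by
  have h : (Finset.range (n+2)).erase a = insert (n+1) ((Finset.range (n+1)).erase a) := by
    ext k
    simp only [Finset.mem_erase, Finset.mem_range, Finset.mem_insert]
    omega
  rw [P, h, Finset.prod_insert (by simp only [Finset.mem_erase, Finset.mem_range]; omega), P]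
  push_cast
  ring

lemma ptle {c d u v N M : ℝ} (hc : 0 ≤ c) (hd : 0 < d) (hu : 0 ≤ u) (hv : 0 ≤ v)
    (hcv : c * v = d * u) (hNM : N * c ≤ M * d) (hN : 0 ≤ N) (hM : 0 ≤ M) :
    N * u ≤ M * v := by
  rcases eq_or_lt_of_le hc with h|h
  · have hu0 : u = 0 := by nlinarith
    rw [hu0, mul_zero]
    exact mul_nonneg hM hv
  · nlinarith [mul_le_mul_of_nonneg_right hNM hu]

lemma polykey (A nn x : ℝ) (hA : 2 ≤ A) (hAn : A ≤ nn) (hx1 : A-2 ≤ x) (hx2 : x ≤ A-1) :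
    (4*A*(nn+A-1)) * (x*(nn-x)*(A^2-(x+1)^2)) ≤
    ((nn-A+2)*(2*A-1)) * ((x+1)*(nn+1+x)*(A^2-x^2)) := by
  have h1 : A*x ≤ (A-1)*(x+1) := by nlinarith
  have h2 : (nn-x)*(nn+A-1) ≤ (nn-A+2)*(nn+1+x) := by nlinarith
  have h3 : 2*(A-1-x) ≤ A-x := by linarith
  have h4 : (2*A-2)*(A+1+x) ≤ (2*A-1)*(A+x) := by nlinarith
  have p1 : 0 ≤ A*x := by nlinarith
  have p2 : 0 ≤ (nn-x)*(nn+A-1) := by nlinarith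
  have p3 : 0 ≤ 2*(A-1-x) := by linarith
  have p4 : 0 ≤ (2*A-2)*(A+1+x) := by nlinarith
  have q1 : 0 ≤ (A-1)*(x+1) := by nlinarith
  have q2 : 0 ≤ (nn-A+2)*(nn+1+x) := by nlinarith
  have H12 : (A*x)*((nn-x)*(nn+A-1)) ≤ ((A-1)*(x+1))*((nn-A+2)*(nn+1+x)) :=
    mul_le_mul h1 h2 p2 q1
  have H123 : (A*x)*((nn-x)*(nn+A-1))*(2*(A-1-x)) ≤
      ((A-1)*(x+1))*((nn-A+2)*(nn+1+x))*(A-x) :=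
    mul_le_mul H12 h3 p3 (mul_nonneg q1 q2)
  have H : (A*x)*((nn-x)*(nn+A-1))*(2*(A-1-x))*((2*A-2)*(A+1+x)) ≤
      ((A-1)*(x+1))*((nn-A+2)*(nn+1+x))*(A-x)*((2*A-1)*(A+x)) :=
    mul_le_mul H123 h4 p4 (mul_nonneg (mul_nonneg q1 q2) (by linarith : (0:ℝ) ≤ A - x))
  have hA1 : (0:ℝ) < A - 1 := by linarith
  have e1 : (A*x)*((nn-x)*(nn+A-1))*(2*(A-1-x))*((2*A-2)*(A+1+x)) = (A-1) * ((4*A*(nn+A-1)) * (x*(nn-x)*(A^2-(x+1)^2))) := by ring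
  have e2 : ((A-1)*(x+1))*((nn-A+2)*(nn+1+x))*(A-x)*((2*A-1)*(A+x)) = (A-1) * (((nn-A+2)*(2*A-1)) * ((x+1)*(nn+1+x)*(A^2-x^2))) := by ring
  rw [e1, e2] at H
  exact le_of_mul_le_mul_left H hA1

lemma K_shift (n a r : ℕ) :
    K n a (r+1) = ∫ x in (r:ℝ)..((r:ℝ)+1), (-1:ℝ)^(r+2) * P n a (x+1) := by
  rw [K]
  rw [intervalIntegral.integral_comp_add_right (fun y => (-1:ℝ)^(r+2) * P n a y) 1]
  push_cast
  norm_num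

lemma intble1 (n a : ℕ) (c e1 e2 : ℝ) :
    IntervalIntegrable (fun x => c * P n a x) MeasureTheory.volume e1 e2 :=
  (continuous_const.mul (P_cont n a)).intervalIntegrable _ _

lemma intble2 (n a : ℕ) (c e1 e2 : ℝ) :
    IntervalIntegrable (fun x => c * P n a (x+1)) MeasureTheory.volume e1 e2 :=
  (continuous_const.mul ((P_cont n a).comp (continuous_id.add continuous_const))).intervalIntegrable _ _

lemma K_pos {n a r : ℕ} (hra : r < a) (han : a ≤ n) : 0 < K n a r := by
  rw [K]
  apply intervalIntegral.intervalIntegral_pos_of_pos_on (intble1 n a _ _ _)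
    (fun x hx => P_pos hra han hx)
  linarith

lemma signed_ident {n a r : ℕ} (han : a ≤ n) (x : ℝ) :
    (x * ((n:ℝ) - x) * ((a:ℝ)^2 - (x+1)^2)) * ((-1:ℝ)^(r+2) * P n a (x+1)) =
    ((x+1) * ((n:ℝ)+1+x) * ((a:ℝ)^2 - x^2)) * ((-1:ℝ)^(r+1) * P n a x) := by
  have hp := Pident han x
  have hs : (-1:ℝ)^(r+2) = -(-1:ℝ)^(r+1) := by rw [pow_succ]; ring
  rw [hs]
  linear_combination (-(-1:ℝ)^(r+1)) * hp

lemma Kmono {n a r : ℕ} (hra : r + 2 ≤ a) (han : a ≤ n) : K n a r ≤ K n a (r+1) := by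
  rw [K_shift, K]
  apply intervalIntegral.integral_mono_on (by linarith : (r:ℝ) ≤ (r:ℝ)+1)
    (intble1 n a _ _ _) (intble2 n a _ _ _)
  intro x hx
  have hra' : (r:ℝ) + 2 ≤ (a:ℝ) := by exact_mod_cast Nat.cast_le.2 hra
  have han' : (a:ℝ) ≤ (n:ℝ) := by exact_mod_cast Nat.cast_le.2 han
  have hr0 : (0:ℝ) ≤ (r:ℝ) := r.cast_nonneg
  have hu : 0 ≤ (-1:ℝ)^(r+1) * P n a x := P_nonneg (by omega) han hx
  have hv : 0 ≤ (-1:ℝ)^(r+2) * P n a (x+1) := by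
    have h := P_nonneg (n := n) (a := a) (r := r+1) (by omega) han (x := x+1)
      (by constructor
          · push_cast; linarith [hx.1]
          · push_cast; linarith [hx.2])
    convert h using 2 <;> push_cast <;> ring
  have hx1 := hx.1
  have hx2 := hx.2
  have hc : 0 ≤ x * ((n:ℝ) - x) * ((a:ℝ)^2 - (x+1)^2) := by
    apply mul_nonneg (mul_nonneg (by linarith) (by linarith))
    nlinarith
  have hd : 0 < (x+1) * ((n:ℝ)+1+x) * ((a:ℝ)^2 - x^2) := by
    apply mul_pos (mul_pos (by linarith) (by linarith))
    nlinarith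
  have hcd : x * ((n:ℝ) - x) * ((a:ℝ)^2 - (x+1)^2) ≤ (x+1) * ((n:ℝ)+1+x) * ((a:ℝ)^2 - x^2) := by
    have e1 : x ≤ x+1 := by linarith
    have e2 : (n:ℝ)-x ≤ (n:ℝ)+1+x := by linarith
    have e3 : (a:ℝ)^2-(x+1)^2 ≤ (a:ℝ)^2-x^2 := by nlinarith
    exact mul_le_mul (mul_le_mul e1 e2 (by linarith) (by linarith)) e3 (by nlinarith) (by nlinarith)
  have := ptle hc hd hu hv (signed_ident han x) (by simpa using hcd) zero_le_one zero_le_one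
  simpa using this

lemma Klambda {n b : ℕ} (hbn : b + 2 ≤ n) :
    (4*((b:ℝ)+2)*((n:ℝ)+(b:ℝ)+1)) * K n (b+2) b ≤
    (((n:ℝ)-(b:ℝ))*(2*(b:ℝ)+3)) * K n (b+2) (b+1) := by
  rw [K_shift, K, ← intervalIntegral.integral_const_mul, ← intervalIntegral.integral_const_mul]
  apply intervalIntegral.integral_mono_on (by linarith [b.cast_nonneg (α := ℝ)] : (b:ℝ) ≤ (b:ℝ)+1)
    ((continuous_const.mul (continuous_const.mul (P_cont n (b+2)))).intervalIntegrable _ _)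
    ((continuous_const.mul (continuous_const.mul
      ((P_cont n (b+2)).comp (continuous_id.add continuous_const)))).intervalIntegrable _ _)
  intro x hx
  have hbn' : (b:ℝ) + 2 ≤ (n:ℝ) := by exact_mod_cast Nat.cast_le.2 hbn
  have hb0 : (0:ℝ) ≤ (b:ℝ) := b.cast_nonneg
  have hx1 := hx.1
  have hx2 := hx.2
  have hu : 0 ≤ (-1:ℝ)^(b+1) * P n (b+2) x := P_nonneg (by omega) hbn hx
  have hv : 0 ≤ (-1:ℝ)^(b+2) * P n (b+2) (x+1) := by
    have h := P_nonneg (n := n) (a := b+2) (r := b+1) (by omega) hbn (x := x+1)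
      (by constructor
          · push_cast; linarith
          · push_cast; linarith)
    convert h using 2 <;> push_cast <;> ring
  have hA2 : ((b:ℝ)+2)^2 = (((b+2:ℕ)):ℝ)^2 := by push_cast; ring
  have hc : 0 ≤ x * ((n:ℝ) - x) * ((((b+2:ℕ)):ℝ)^2 - (x+1)^2) := by
    rw [← hA2]
    apply mul_nonneg (mul_nonneg (by linarith) (by linarith))
    nlinarith
  have hd : 0 < (x+1) * ((n:ℝ)+1+x) * ((((b+2:ℕ)):ℝ)^2 - x^2) := by
    rw [← hA2]
    apply mul_pos (mul_pos (by linarith) (by linarith))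
    nlinarith
  have hkey := polykey ((b:ℝ)+2) (n:ℝ) x (by linarith) (by linarith)
    (by linarith) (by linarith)
  have hNM : (4*((b:ℝ)+2)*((n:ℝ)+(b:ℝ)+1)) * (x * ((n:ℝ) - x) * ((((b+2:ℕ)):ℝ)^2 - (x+1)^2)) ≤
      (((n:ℝ)-(b:ℝ))*(2*(b:ℝ)+3)) * ((x+1) * ((n:ℝ)+1+x) * ((((b+2:ℕ)):ℝ)^2 - x^2)) := by
    rw [← hA2]
    calc (4*((b:ℝ)+2)*((n:ℝ)+(b:ℝ)+1)) * (x * ((n:ℝ) - x) * (((b:ℝ)+2)^2 - (x+1)^2))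
        = (4*((b:ℝ)+2)*((n:ℝ)+((b:ℝ)+2)-1)) * (x*((n:ℝ)-x)*(((b:ℝ)+2)^2-(x+1)^2)) := by ring
      _ ≤ (((n:ℝ)-((b:ℝ)+2)+2)*(2*((b:ℝ)+2)-1)) * ((x+1)*((n:ℝ)+1+x)*(((b:ℝ)+2)^2-x^2)) := hkey
      _ = (((n:ℝ)-(b:ℝ))*(2*(b:ℝ)+3)) * ((x+1) * ((n:ℝ)+1+x) * (((b:ℝ)+2)^2 - x^2)) := by ring
  have hN : (0:ℝ) ≤ 4*((b:ℝ)+2)*((n:ℝ)+(b:ℝ)+1) := by nlinarith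
  have hM : (0:ℝ) ≤ ((n:ℝ)-(b:ℝ))*(2*(b:ℝ)+3) := by nlinarith
  exact ptle hc hd hu hv (signed_ident hbn x) hNM hN hM

lemma KprimeL {n a r : ℕ} (hra : r < a) (han : a ≤ n) :
    (((n:ℝ)+1)^2 - ((r:ℝ)+1)^2) * K n a r ≤ K (n+1) a r := by
  rw [K, K, ← intervalIntegral.integral_const_mul]
  apply intervalIntegral.integral_mono_on (by linarith : (r:ℝ) ≤ (r:ℝ)+1)
    ((continuous_const.mul (continuous_const.mul (P_cont n a))).intervalIntegrable _ _)
    ((continuous_const.mul (P_cont (n+1) a)).intervalIntegrable _ _)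
  intro x hx
  have hu : 0 ≤ (-1:ℝ)^(r+1) * P n a x := P_nonneg hra han hx
  have han' : (a:ℝ) ≤ (n:ℝ) := by exact_mod_cast Nat.cast_le.2 han
  have hra' : (r:ℝ) + 1 ≤ (a:ℝ) := by exact_mod_cast Nat.cast_le.2 hra
  have hr0 : (0:ℝ) ≤ (r:ℝ) := r.cast_nonneg
  have hw : (((n:ℝ)+1)^2 - ((r:ℝ)+1)^2) ≤ (((n:ℝ)+1)^2 - x^2) := by nlinarith [hx.1, hx.2]
  calc (((n:ℝ)+1)^2 - ((r:ℝ)+1)^2) * ((-1:ℝ)^(r+1) * P n a x)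
      ≤ (((n:ℝ)+1)^2 - x^2) * ((-1:ℝ)^(r+1) * P n a x) := mul_le_mul_of_nonneg_right hw hu
    _ = (-1:ℝ)^(r+1) * P (n+1) a x := by rw [Psucc han]; ring

lemma KprimeU {n a r : ℕ} (hra : r < a) (han : a ≤ n) :
    K (n+1) a r ≤ (((n:ℝ)+1)^2 - (r:ℝ)^2) * K n a r := by
  rw [K, K, ← intervalIntegral.integral_const_mul]
  apply intervalIntegral.integral_mono_on (by linarith : (r:ℝ) ≤ (r:ℝ)+1)
    ((continuous_const.mul (P_cont (n+1) a)).intervalIntegrable _ _)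
    ((continuous_const.mul (continuous_const.mul (P_cont n a))).intervalIntegrable _ _)
  intro x hx
  have hu : 0 ≤ (-1:ℝ)^(r+1) * P n a x := P_nonneg hra han hx
  have han' : (a:ℝ) ≤ (n:ℝ) := by exact_mod_cast Nat.cast_le.2 han
  have hra' : (r:ℝ) + 1 ≤ (a:ℝ) := by exact_mod_cast Nat.cast_le.2 hra
  have hr0 : (0:ℝ) ≤ (r:ℝ) := r.cast_nonneg
  have hw : (((n:ℝ)+1)^2 - x^2) ≤ (((n:ℝ)+1)^2 - (r:ℝ)^2) := by nlinarith [hx.1, hx.2]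
  calc (-1:ℝ)^(r+1) * P (n+1) a x
      = (((n:ℝ)+1)^2 - x^2) * ((-1:ℝ)^(r+1) * P n a x) := by rw [Psucc han]; ring
    _ ≤ (((n:ℝ)+1)^2 - (r:ℝ)^2) * ((-1:ℝ)^(r+1) * P n a x) := mul_le_mul_of_nonneg_right hw hu

lemma I_eq_T (n a : ℕ) : I n a = T n a a := by
  rw [I, T]
  have h := intervalIntegral.sum_integral_adjacent_intervals (μ := MeasureTheory.volume)
    (a := fun i : ℕ => (i:ℝ)) (n := a) (f := P n a)
    (fun i _ => (P_cont n a).intervalIntegrable _ _)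
  simp only [Nat.cast_zero] at h
  rw [show (∫ x in (0:ℝ)..(a:ℝ), ∏ k ∈ (Finset.range (n+1)).erase a, ((k:ℝ)^2 - x^2))
      = ∫ x in (0:ℝ)..(a:ℝ), P n a x from rfl, ← h]
  exact Finset.sum_congr rfl fun r _ => by push_cast; norm_num

lemma K_eq (n a r : ℕ) : K n a r = (-1:ℝ)^(r+1) * ∫ x in (r:ℝ)..((r:ℝ)+1), P n a x := by
  rw [K, intervalIntegral.integral_const_mul]

lemma T_succ (n a m : ℕ) :
    (-1:ℝ)^(m+2) * T n a (m+2) = K n a (m+1) - (-1:ℝ)^(m+1) * T n a (m+1) := by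
  rw [T, Finset.sum_range_succ, ← T, K_eq]
  have : ((m+1:ℕ):ℝ) = (m:ℝ)+1 := by push_cast; ring
  rw [this]
  have hs : (-1:ℝ)^(m+2) = -(-1:ℝ)^(m+1) := by rw [pow_succ]; ring
  rw [hs]
  ring

lemma T_bounds {n a : ℕ} (han : a ≤ n) :
    ∀ m, m < a → 0 ≤ (-1:ℝ)^(m+1) * T n a (m+1) ∧ (-1:ℝ)^(m+1) * T n a (m+1) ≤ K n a m := by
  intro m
  induction m with
  | zero =>
    intro h0
    have : T n a 1 = ∫ x in (0:ℝ)..(0:ℝ)+1, P n a x := by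
      rw [T, Finset.sum_range_one, Nat.cast_zero]
    have hK : (-1:ℝ)^(0+1) * T n a 1 = K n a 0 := by
      rw [this, K_eq, Nat.cast_zero]
    rw [hK]
    exact ⟨(K_pos h0 han).le, le_refl _⟩
  | succ m ih =>
    intro hm
    have ihm := ih (by omega)
    have hmono := Kmono (by omega : m + 2 ≤ a) han
    have hstep := T_succ n a m
    constructor
    · rw [show m+1+1 = m+2 from rfl, hstep]
      linarith [ihm.2]
    · rw [show m+1+1 = m+2 from rfl, hstep]
      linarith [ihm.1]

lemma I_abs {n c : ℕ} (han : c + 1 ≤ n) :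
    |I n (c+1)| = (-1:ℝ)^(c+1) * I n (c+1) ∧ (-1:ℝ)^(c+1) * I n (c+1) ≤ K n (c+1) c := by
  have hb := T_bounds han c (by omega)
  rw [I_eq_T]
  refine ⟨?_, hb.2⟩
  have h1 : |T n (c+1) (c+1)| = |(-1:ℝ)^(c+1) * T n (c+1) (c+1)| := by
    rw [abs_mul, abs_pow, abs_neg, abs_one, one_pow, one_mul]
  rw [h1, abs_of_nonneg hb.1]

lemma I1_eq (n : ℕ) (hn : 1 ≤ n) : (-1:ℝ)^1 * I n 1 = K n 1 0 := by
  rw [I_eq_T, K_eq, T]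
  simp [Finset.sum_range_one]

lemma I_lower {n b : ℕ} (hbn : b + 2 ≤ n) :
    K n (b+2) (b+1) - K n (b+2) b ≤ (-1:ℝ)^(b+2) * I n (b+2) := by
  rw [I_eq_T, T_succ]
  have hb := T_bounds hbn b (by omega)
  linarith [hb.2]

lemma core2 {n b : ℕ} (hn4 : 4 ≤ n) (hbn : b + 2 ≤ n) :
    2*π*((n:ℝ)+1-((b:ℝ)+2))*((n:ℝ)+1+((b:ℝ)+2)) * |I n (b+2)| ≤
    (2*(n:ℝ)+2) * |I (n+1) (b+2)| := by
  have hN4 : (4:ℝ) ≤ (n:ℝ) := by exact_mod_cast Nat.cast_le.2 hn4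
  have hbN : (b:ℝ) + 2 ≤ (n:ℝ) := by exact_mod_cast Nat.cast_le.2 hbn
  have hb0 : (0:ℝ) ≤ (b:ℝ) := b.cast_nonneg
  -- abbreviations as hypotheses
  have f1 : |I n (b+2)| ≤ K n (b+2) (b+1) := by
    have := I_abs (n := n) (c := b+1) (by omega)
    rw [this.1]; exact this.2
  have f2 : K (n+1) (b+2) (b+1) - K (n+1) (b+2) b ≤ |I (n+1) (b+2)| := by
    have habs := I_abs (n := n+1) (c := b+1) (by omega)
    have := I_lower (n := n+1) (b := b) (by omega)
    rw [habs.1]; exact this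
  have f3 : (((n:ℝ)+1)^2 - ((b:ℝ)+2)^2) * K n (b+2) (b+1) ≤ K (n+1) (b+2) (b+1) := by
    have h := KprimeL (n := n) (a := b+2) (r := b+1) (by omega) hbn
    have e : (((b+1:ℕ)):ℝ) + 1 = (b:ℝ)+2 := by push_cast; ring
    rw [e] at h; exact h
  have f4 : K (n+1) (b+2) b ≤ (((n:ℝ)+1)^2 - (b:ℝ)^2) * K n (b+2) b :=
    KprimeU (by omega) hbn
  have f5 := Klambda hbn
  have hKb1 : 0 < K n (b+2) (b+1) := K_pos (by omega) hbn
  have hKb : 0 < K n (b+2) b := K_pos (by omega) hbn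
  have hW1 : (0:ℝ) ≤ ((n:ℝ)+1)^2 - ((b:ℝ)+2)^2 := by nlinarith
  have hW2 : (0:ℝ) ≤ ((n:ℝ)+1)^2 - (b:ℝ)^2 := by nlinarith
  have hL : (0:ℝ) < 4*((b:ℝ)+2)*((n:ℝ)+(b:ℝ)+1) := by nlinarith
  -- step 1 : lower bound for |I (n+1) (b+2)| in terms of K at level n
  have step1 : (((n:ℝ)+1)^2 - ((b:ℝ)+2)^2) * K n (b+2) (b+1)
      - (((n:ℝ)+1)^2 - (b:ℝ)^2) * K n (b+2) b ≤ |I (n+1) (b+2)| := by linarith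
  have step2 := mul_le_mul_of_nonneg_left f5 hW2
  have step3 := mul_le_mul_of_nonneg_left step1 hL.le
  -- numeric inequality
  have hnum : 63 * (((n:ℝ)+1)^2 - ((b:ℝ)+2)^2) * (4*((b:ℝ)+2)*((n:ℝ)+(b:ℝ)+1)) ≤
      20*((n:ℝ)+1)*((4*((b:ℝ)+2)*((n:ℝ)+(b:ℝ)+1))*(((n:ℝ)+1)^2-((b:ℝ)+2)^2)
        - (((n:ℝ)+1)^2-(b:ℝ)^2)*((n:ℝ)-(b:ℝ))*(2*((b:ℝ)+2)-1)) := by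
    nlinarith [sq_nonneg ((n:ℝ)-((b:ℝ)+2)), sq_nonneg (b:ℝ),
      mul_nonneg (sub_nonneg.2 hbN) hb0, sq_nonneg ((n:ℝ)-4), sq_nonneg ((n:ℝ)*((b:ℝ)+2) - 4),
      mul_nonneg (mul_nonneg (sub_nonneg.2 hbN) hb0) (by linarith : (0:ℝ) ≤ (n:ℝ) - 4),
      mul_nonneg (mul_nonneg hb0 hb0) (sub_nonneg.2 hbN)]
  have hKb1' := hKb1.le
  have hpi : π < 3.15 := pi_lt_d2
  have hpi0 : 0 < π := pi_pos
  -- combine: (2n+2) * L * |I'| ≥ (63/10) * W1 * L * Kb1  ≥ 2π W1 L Kb1 ≥ 2π W1 L |I|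
  have hfac : (0:ℝ) ≤ 2*π*((((n:ℝ)+1)^2 - ((b:ℝ)+2)^2))*(4*((b:ℝ)+2)*((n:ℝ)+(b:ℝ)+1)) := by
    apply mul_nonneg (mul_nonneg (by linarith) hW1) hL.le
  have hp1 := mul_le_mul_of_nonneg_left f1 hfac
  have hnum2 := mul_le_mul_of_nonneg_right hnum hKb1'
  have hp2 : (0:ℝ) ≤ (6.3 - 2*π) * ((((n:ℝ)+1)^2 - ((b:ℝ)+2)^2) *
      (4*((b:ℝ)+2)*((n:ℝ)+(b:ℝ)+1)) * K n (b+2) (b+1)) :=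
    mul_nonneg (by linarith) (mul_nonneg (mul_nonneg hW1 hL.le) hKb1')
  have step4 : ((4*((b:ℝ)+2)*((n:ℝ)+(b:ℝ)+1))*(((n:ℝ)+1)^2-((b:ℝ)+2)^2)
      - (((n:ℝ)+1)^2-(b:ℝ)^2)*((n:ℝ)-(b:ℝ))*(2*((b:ℝ)+2)-1)) * K n (b+2) (b+1)
      ≤ (4*((b:ℝ)+2)*((n:ℝ)+(b:ℝ)+1)) * |I (n+1) (b+2)| := by linarith
  have step5 := mul_le_mul_of_nonneg_left step4
    (by linarith : (0:ℝ) ≤ 20*((n:ℝ)+1))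
  have main : (4*((b:ℝ)+2)*((n:ℝ)+(b:ℝ)+1)) *
      (2*π*((n:ℝ)+1-((b:ℝ)+2))*((n:ℝ)+1+((b:ℝ)+2)) * |I n (b+2)|) ≤
      (4*((b:ℝ)+2)*((n:ℝ)+(b:ℝ)+1)) * ((2*(n:ℝ)+2) * |I (n+1) (b+2)|) := by
    linarith [hp1, hnum2, hp2, step5]
  exact le_of_mul_le_mul_left main hL

lemma core1 {n : ℕ} (hn3 : 3 ≤ n) :
    2*π*((n:ℝ)+1-1)*((n:ℝ)+1+1) * |I n 1| < (2*(n:ℝ)+2) * |I (n+1) 1| := by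
  have hN : (3:ℝ) ≤ (n:ℝ) := by exact_mod_cast Nat.cast_le.2 hn3
  have e1 : |I n 1| = K n 1 0 := by
    have habs := I_abs (n := n) (c := 0) (by omega)
    rw [habs.1, ← I1_eq n (by omega)]
  have e2 : |I (n+1) 1| = K (n+1) 1 0 := by
    have habs := I_abs (n := n+1) (c := 0) (by omega)
    rw [habs.1, ← I1_eq (n+1) (by omega)]
  have f3 : (((n:ℝ)+1)^2 - ((0:ℝ)+1)^2) * K n 1 0 ≤ K (n+1) 1 0 := by
    have h := KprimeL (n := n) (a := 1) (r := 0) (by omega) (by omega)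
    rw [Nat.cast_zero] at h; exact h
  have hK : 0 < K n 1 0 := K_pos (by omega) (by omega)
  have hpi : π < 3.15 := pi_lt_d2
  rw [e1, e2]
  have h1 : 2*π*((n:ℝ)+1-1)*((n:ℝ)+1+1) * K n 1 0 < (2*(n:ℝ)+2) * ((((n:ℝ)+1)^2 - 1) * K n 1 0) := by
    have hx : 0 < ((n:ℝ)*((n:ℝ)+2))*K n 1 0 := mul_pos (by nlinarith) hK
    have hc : (0:ℝ) < 2*(n:ℝ)+2 - 2*π := by linarith
    nlinarith [mul_pos hc hx]
  calc 2*π*((n:ℝ)+1-1)*((n:ℝ)+1+1) * K n 1 0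
      < (2*(n:ℝ)+2) * ((((n:ℝ)+1)^2 - 1) * K n 1 0) := h1
    _ ≤ (2*(n:ℝ)+2) * K (n+1) 1 0 := by
        apply mul_le_mul_of_nonneg_left _ (by linarith : (0:ℝ) ≤ 2*(n:ℝ)+2)
        calc (((n:ℝ)+1)^2 - 1) * K n 1 0 = (((n:ℝ)+1)^2 - ((0:ℝ)+1)^2) * K n 1 0 := by ring_nf
          _ ≤ K (n+1) 1 0 := f3

lemma Ival_1_1 : I 1 1 = (-1/3 : ℝ) := by
  have hprod : ∀ x : ℝ, (∏ k ∈ (Finset.range 2).erase 1, ((k:ℝ)^2 - x^2)) = (-1)*x^2 := by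
    intro x
    rw [show (Finset.range 2).erase 1 = {0} from by decide]
    norm_num [Finset.prod_insert, Finset.mem_insert, Finset.mem_singleton, Finset.prod_singleton]
    try ring
  have hder : ∀ x ∈ Set.uIcc (0:ℝ) ((1:ℕ):ℝ),
      HasDerivAt (fun y : ℝ => (-1/3)*y^3) (∏ k ∈ (Finset.range 2).erase 1, ((k:ℝ)^2 - x^2)) x := by
    intro x _
    have h := ((hasDerivAt_pow 3 x).const_mul ((-1/3) : ℝ))
    have e : (-1/3)*((3:ℕ)*x^(3-1)) = ∏ k ∈ (Finset.range 2).erase 1, ((k:ℝ)^2 - x^2) := by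
      rw [hprod x]; norm_num; try ring
    exact e ▸ h
  rw [I, intervalIntegral.integral_eq_sub_of_hasDerivAt hder
    ((continuous_finset_prod _ fun _ _ => continuous_const.sub (continuous_pow 2)).intervalIntegrable _ _)]
  norm_num

lemma Ival_2_1 : I 2 1 = (-17/15 : ℝ) := by
  have hprod : ∀ x : ℝ, (∏ k ∈ (Finset.range 3).erase 1, ((k:ℝ)^2 - x^2)) = (-4)*x^2 + (1)*x^4 := by
    intro x
    rw [show (Finset.range 3).erase 1 = {0, 2} from by decide]
    norm_num [Finset.prod_insert, Finset.mem_insert, Finset.mem_singleton, Finset.prod_singleton]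
    try ring
  have hder : ∀ x ∈ Set.uIcc (0:ℝ) ((1:ℕ):ℝ),
      HasDerivAt (fun y : ℝ => (-4/3)*y^3 + (1/5)*y^5) (∏ k ∈ (Finset.range 3).erase 1, ((k:ℝ)^2 - x^2)) x := by
    intro x _
    have h := (((hasDerivAt_pow 3 x).const_mul ((-4/3) : ℝ)).add ((hasDerivAt_pow 5 x).const_mul ((1/5) : ℝ)))
    have e : (-4/3)*((3:ℕ)*x^(3-1)) + (1/5)*((5:ℕ)*x^(5-1)) = ∏ k ∈ (Finset.range 3).erase 1, ((k:ℝ)^2 - x^2) := by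
      rw [hprod x]; norm_num; try ring
    exact e ▸ h
  rw [I, intervalIntegral.integral_eq_sub_of_hasDerivAt hder
    ((continuous_finset_prod _ fun _ _ => continuous_const.sub (continuous_pow 2)).intervalIntegrable _ _)]
  norm_num

lemma Ival_2_2 : I 2 2 = (56/15 : ℝ) := by
  have hprod : ∀ x : ℝ, (∏ k ∈ (Finset.range 3).erase 2, ((k:ℝ)^2 - x^2)) = (-1)*x^2 + (1)*x^4 := by
    intro x
    rw [show (Finset.range 3).erase 2 = {0, 1} from by decide]
    norm_num [Finset.prod_insert, Finset.mem_insert, Finset.mem_singleton, Finset.prod_singleton]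
    try ring
  have hder : ∀ x ∈ Set.uIcc (0:ℝ) ((2:ℕ):ℝ),
      HasDerivAt (fun y : ℝ => (-1/3)*y^3 + (1/5)*y^5) (∏ k ∈ (Finset.range 3).erase 2, ((k:ℝ)^2 - x^2)) x := by
    intro x _
    have h := (((hasDerivAt_pow 3 x).const_mul ((-1/3) : ℝ)).add ((hasDerivAt_pow 5 x).const_mul ((1/5) : ℝ)))
    have e : (-1/3)*((3:ℕ)*x^(3-1)) + (1/5)*((5:ℕ)*x^(5-1)) = ∏ k ∈ (Finset.range 3).erase 2, ((k:ℝ)^2 - x^2) := by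
      rw [hprod x]; norm_num; try ring
    exact e ▸ h
  rw [I, intervalIntegral.integral_eq_sub_of_hasDerivAt hder
    ((continuous_finset_prod _ fun _ _ => continuous_const.sub (continuous_pow 2)).intervalIntegrable _ _)]
  norm_num

lemma Ival_3_1 : I 3 1 = (-334/35 : ℝ) := by
  have hprod : ∀ x : ℝ, (∏ k ∈ (Finset.range 4).erase 1, ((k:ℝ)^2 - x^2)) = (-36)*x^2 + (13)*x^4 + (-1)*x^6 := by
    intro x
    rw [show (Finset.range 4).erase 1 = {0, 2, 3} from by decide]
    norm_num [Finset.prod_insert, Finset.mem_insert, Finset.mem_singleton, Finset.prod_singleton]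
    try ring
  have hder : ∀ x ∈ Set.uIcc (0:ℝ) ((1:ℕ):ℝ),
      HasDerivAt (fun y : ℝ => (-36/3)*y^3 + (13/5)*y^5 + (-1/7)*y^7) (∏ k ∈ (Finset.range 4).erase 1, ((k:ℝ)^2 - x^2)) x := by
    intro x _
    have h := ((((hasDerivAt_pow 3 x).const_mul ((-36/3) : ℝ)).add ((hasDerivAt_pow 5 x).const_mul ((13/5) : ℝ))).add ((hasDerivAt_pow 7 x).const_mul ((-1/7) : ℝ)))
    have e : (-36/3)*((3:ℕ)*x^(3-1)) + (13/5)*((5:ℕ)*x^(5-1)) + (-1/7)*((7:ℕ)*x^(7-1)) = ∏ k ∈ (Finset.range 4).erase 1, ((k:ℝ)^2 - x^2) := by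
      rw [hprod x]; norm_num; try ring
    exact e ▸ h
  rw [I, intervalIntegral.integral_eq_sub_of_hasDerivAt hder
    ((continuous_finset_prod _ fun _ _ => continuous_const.sub (continuous_pow 2)).intervalIntegrable _ _)]
  norm_num

lemma Ival_3_2 : I 3 2 = (152/7 : ℝ) := by
  have hprod : ∀ x : ℝ, (∏ k ∈ (Finset.range 4).erase 2, ((k:ℝ)^2 - x^2)) = (-9)*x^2 + (10)*x^4 + (-1)*x^6 := by
    intro x
    rw [show (Finset.range 4).erase 2 = {0, 1, 3} from by decide]
    norm_num [Finset.prod_insert, Finset.mem_insert, Finset.mem_singleton, Finset.prod_singleton]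
    try ring
  have hder : ∀ x ∈ Set.uIcc (0:ℝ) ((2:ℕ):ℝ),
      HasDerivAt (fun y : ℝ => (-9/3)*y^3 + (10/5)*y^5 + (-1/7)*y^7) (∏ k ∈ (Finset.range 4).erase 2, ((k:ℝ)^2 - x^2)) x := by
    intro x _
    have h := ((((hasDerivAt_pow 3 x).const_mul ((-9/3) : ℝ)).add ((hasDerivAt_pow 5 x).const_mul ((10/5) : ℝ))).add ((hasDerivAt_pow 7 x).const_mul ((-1/7) : ℝ)))
    have e : (-9/3)*((3:ℕ)*x^(3-1)) + (10/5)*((5:ℕ)*x^(5-1)) + (-1/7)*((7:ℕ)*x^(7-1)) = ∏ k ∈ (Finset.range 4).erase 2, ((k:ℝ)^2 - x^2) := by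
      rw [hprod x]; norm_num; try ring
    exact e ▸ h
  rw [I, intervalIntegral.integral_eq_sub_of_hasDerivAt hder
    ((continuous_finset_prod _ fun _ _ => continuous_const.sub (continuous_pow 2)).intervalIntegrable _ _)]
  norm_num

lemma Ival_3_3 : I 3 3 = (-738/7 : ℝ) := by
  have hprod : ∀ x : ℝ, (∏ k ∈ (Finset.range 4).erase 3, ((k:ℝ)^2 - x^2)) = (-4)*x^2 + (5)*x^4 + (-1)*x^6 := by
    intro x
    rw [show (Finset.range 4).erase 3 = {0, 1, 2} from by decide]
    norm_num [Finset.prod_insert, Finset.mem_insert, Finset.mem_singleton, Finset.prod_singleton]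
    try ring
  have hder : ∀ x ∈ Set.uIcc (0:ℝ) ((3:ℕ):ℝ),
      HasDerivAt (fun y : ℝ => (-4/3)*y^3 + (5/5)*y^5 + (-1/7)*y^7) (∏ k ∈ (Finset.range 4).erase 3, ((k:ℝ)^2 - x^2)) x := by
    intro x _
    have h := ((((hasDerivAt_pow 3 x).const_mul ((-4/3) : ℝ)).add ((hasDerivAt_pow 5 x).const_mul ((5/5) : ℝ))).add ((hasDerivAt_pow 7 x).const_mul ((-1/7) : ℝ)))
    have e : (-4/3)*((3:ℕ)*x^(3-1)) + (5/5)*((5:ℕ)*x^(5-1)) + (-1/7)*((7:ℕ)*x^(7-1)) = ∏ k ∈ (Finset.range 4).erase 3, ((k:ℝ)^2 - x^2) := by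
      rw [hprod x]; norm_num; try ring
    exact e ▸ h
  rw [I, intervalIntegral.integral_eq_sub_of_hasDerivAt hder
    ((continuous_finset_prod _ fun _ _ => continuous_const.sub (continuous_pow 2)).intervalIntegrable _ _)]
  norm_num

lemma Ival_4_1 : I 4 1 = (-46378/315 : ℝ) := by
  have hprod : ∀ x : ℝ, (∏ k ∈ (Finset.range 5).erase 1, ((k:ℝ)^2 - x^2)) = (-576)*x^2 + (244)*x^4 + (-29)*x^6 + (1)*x^8 := by
    intro x
    rw [show (Finset.range 5).erase 1 = {0, 2, 3, 4} from by decide]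
    norm_num [Finset.prod_insert, Finset.mem_insert, Finset.mem_singleton, Finset.prod_singleton]
    try ring
  have hder : ∀ x ∈ Set.uIcc (0:ℝ) ((1:ℕ):ℝ),
      HasDerivAt (fun y : ℝ => (-576/3)*y^3 + (244/5)*y^5 + (-29/7)*y^7 + (1/9)*y^9) (∏ k ∈ (Finset.range 5).erase 1, ((k:ℝ)^2 - x^2)) x := by
    intro x _
    have h := (((((hasDerivAt_pow 3 x).const_mul ((-576/3) : ℝ)).add ((hasDerivAt_pow 5 x).const_mul ((244/5) : ℝ))).add ((hasDerivAt_pow 7 x).const_mul ((-29/7) : ℝ))).add ((hasDerivAt_pow 9 x).const_mul ((1/9) : ℝ)))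
    have e : (-576/3)*((3:ℕ)*x^(3-1)) + (244/5)*((5:ℕ)*x^(5-1)) + (-29/7)*((7:ℕ)*x^(7-1)) + (1/9)*((9:ℕ)*x^(9-1)) = ∏ k ∈ (Finset.range 5).erase 1, ((k:ℝ)^2 - x^2) := by
      rw [hprod x]; norm_num; try ring
    exact e ▸ h
  rw [I, intervalIntegral.integral_eq_sub_of_hasDerivAt hder
    ((continuous_finset_prod _ fun _ _ => continuous_const.sub (continuous_pow 2)).intervalIntegrable _ _)]
  norm_num

lemma Ival_4_2 : I 4 2 = (87904/315 : ℝ) := by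
  have hprod : ∀ x : ℝ, (∏ k ∈ (Finset.range 5).erase 2, ((k:ℝ)^2 - x^2)) = (-144)*x^2 + (169)*x^4 + (-26)*x^6 + (1)*x^8 := by
    intro x
    rw [show (Finset.range 5).erase 2 = {0, 1, 3, 4} from by decide]
    norm_num [Finset.prod_insert, Finset.mem_insert, Finset.mem_singleton, Finset.prod_singleton]
    try ring
  have hder : ∀ x ∈ Set.uIcc (0:ℝ) ((2:ℕ):ℝ),
      HasDerivAt (fun y : ℝ => (-144/3)*y^3 + (169/5)*y^5 + (-26/7)*y^7 + (1/9)*y^9) (∏ k ∈ (Finset.range 5).erase 2, ((k:ℝ)^2 - x^2)) x := by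
    intro x _
    have h := (((((hasDerivAt_pow 3 x).const_mul ((-144/3) : ℝ)).add ((hasDerivAt_pow 5 x).const_mul ((169/5) : ℝ))).add ((hasDerivAt_pow 7 x).const_mul ((-26/7) : ℝ))).add ((hasDerivAt_pow 9 x).const_mul ((1/9) : ℝ)))
    have e : (-144/3)*((3:ℕ)*x^(3-1)) + (169/5)*((5:ℕ)*x^(5-1)) + (-26/7)*((7:ℕ)*x^(7-1)) + (1/9)*((9:ℕ)*x^(9-1)) = ∏ k ∈ (Finset.range 5).erase 2, ((k:ℝ)^2 - x^2) := by
      rw [hprod x]; norm_num; try ring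
    exact e ▸ h
  rw [I, intervalIntegral.integral_eq_sub_of_hasDerivAt hder
    ((continuous_finset_prod _ fun _ _ => continuous_const.sub (continuous_pow 2)).intervalIntegrable _ _)]
  norm_num

lemma Ival_4_3 : I 4 3 = (-4338/5 : ℝ) := by
  have hprod : ∀ x : ℝ, (∏ k ∈ (Finset.range 5).erase 3, ((k:ℝ)^2 - x^2)) = (-64)*x^2 + (84)*x^4 + (-21)*x^6 + (1)*x^8 := by
    intro x
    rw [show (Finset.range 5).erase 3 = {0, 1, 2, 4} from by decide]
    norm_num [Finset.prod_insert, Finset.mem_insert, Finset.mem_singleton, Finset.prod_singleton]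
    try ring
  have hder : ∀ x ∈ Set.uIcc (0:ℝ) ((3:ℕ):ℝ),
      HasDerivAt (fun y : ℝ => (-64/3)*y^3 + (84/5)*y^5 + (-21/7)*y^7 + (1/9)*y^9) (∏ k ∈ (Finset.range 5).erase 3, ((k:ℝ)^2 - x^2)) x := by
    intro x _
    have h := (((((hasDerivAt_pow 3 x).const_mul ((-64/3) : ℝ)).add ((hasDerivAt_pow 5 x).const_mul ((84/5) : ℝ))).add ((hasDerivAt_pow 7 x).const_mul ((-21/7) : ℝ))).add ((hasDerivAt_pow 9 x).const_mul ((1/9) : ℝ)))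
    have e : (-64/3)*((3:ℕ)*x^(3-1)) + (84/5)*((5:ℕ)*x^(5-1)) + (-21/7)*((7:ℕ)*x^(7-1)) + (1/9)*((9:ℕ)*x^(9-1)) = ∏ k ∈ (Finset.range 5).erase 3, ((k:ℝ)^2 - x^2) := by
      rw [hprod x]; norm_num; try ring
    exact e ▸ h
  rw [I, intervalIntegral.integral_eq_sub_of_hasDerivAt hder
    ((continuous_finset_prod _ fun _ _ => continuous_const.sub (continuous_pow 2)).intervalIntegrable _ _)]
  norm_num

lemma Ival_4_4 : I 4 4 = (253184/45 : ℝ) := by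
  have hprod : ∀ x : ℝ, (∏ k ∈ (Finset.range 5).erase 4, ((k:ℝ)^2 - x^2)) = (-36)*x^2 + (49)*x^4 + (-14)*x^6 + (1)*x^8 := by
    intro x
    rw [show (Finset.range 5).erase 4 = {0, 1, 2, 3} from by decide]
    norm_num [Finset.prod_insert, Finset.mem_insert, Finset.mem_singleton, Finset.prod_singleton]
    try ring
  have hder : ∀ x ∈ Set.uIcc (0:ℝ) ((4:ℕ):ℝ),
      HasDerivAt (fun y : ℝ => (-36/3)*y^3 + (49/5)*y^5 + (-14/7)*y^7 + (1/9)*y^9) (∏ k ∈ (Finset.range 5).erase 4, ((k:ℝ)^2 - x^2)) x := by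
    intro x _
    have h := (((((hasDerivAt_pow 3 x).const_mul ((-36/3) : ℝ)).add ((hasDerivAt_pow 5 x).const_mul ((49/5) : ℝ))).add ((hasDerivAt_pow 7 x).const_mul ((-14/7) : ℝ))).add ((hasDerivAt_pow 9 x).const_mul ((1/9) : ℝ)))
    have e : (-36/3)*((3:ℕ)*x^(3-1)) + (49/5)*((5:ℕ)*x^(5-1)) + (-14/7)*((7:ℕ)*x^(7-1)) + (1/9)*((9:ℕ)*x^(9-1)) = ∏ k ∈ (Finset.range 5).erase 4, ((k:ℝ)^2 - x^2) := by
      rw [hprod x]; norm_num; try ring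
    exact e ▸ h
  rw [I, intervalIntegral.integral_eq_sub_of_hasDerivAt hder
    ((continuous_finset_prod _ fun _ _ => continuous_const.sub (continuous_pow 2)).intervalIntegrable _ _)]
  norm_num

lemma C_pos (n : ℕ) : 0 < C n :=
  div_pos (rpow_pos_of_pos (by positivity) _) (Real.Gamma_pos_of_pos (by positivity))

lemma C_succ (n : ℕ) : C (n+1) = C n / (4*π*((n:ℝ)+1/2)) := by
  have h4 : (0:ℝ) < 4*π := by positivity
  have hg : Real.Gamma ((((n+1:ℕ)):ℝ) + 1/2) = ((n:ℝ)+1/2) * Real.Gamma ((n:ℝ)+1/2) := by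
    have e : (((n+1:ℕ)):ℝ) + 1/2 = ((n:ℝ)+1/2) + 1 := by push_cast; ring
    rw [e, Real.Gamma_add_one (by positivity)]
  have hr : (4*π) ^ (-(((n+1:ℕ):ℝ) + 1/2)) = (4*π) ^ (-((n:ℝ)+1/2)) / (4*π) := by
    have e : (-(((n+1:ℕ):ℝ) + 1/2)) = (-((n:ℝ)+1/2)) + (-1) := by push_cast; ring
    rw [e, rpow_add h4, rpow_neg_one]
    ring
  rw [C, C, hg, hr]
  have hgne : Real.Gamma ((n:ℝ)+1/2) ≠ 0 := (Real.Gamma_pos_of_pos (by positivity)).ne'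
  field_simp

lemma alpha_step {n : ℕ}
    (h : 2*π*(2*(n:ℝ)+1) * (∑ j ∈ Finset.range n, ((2*n).choose j : ℝ) * |I n (n-j)|) <
      ∑ j ∈ Finset.range (n+1), ((2*(n+1)).choose j : ℝ) * |I (n+1) (n+1-j)|) :
    α (n+1) > α n := by
  rw [α, α, C_succ]
  have hc := C_pos n
  have hhalf : (0:ℝ) < (n:ℝ)+1/2 := by positivity
  have hpi : (0:ℝ) < π := pi_pos
  have e : 4*π * (C n / (4*π*((n:ℝ)+1/2))) *
      (∑ j ∈ Finset.range (n+1), ((2*(n+1)).choose j : ℝ) * |I (n+1) (n+1-j)|)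
      = (C n) * (∑ j ∈ Finset.range (n+1), ((2*(n+1)).choose j : ℝ) * |I (n+1) (n+1-j)|) /
        ((n:ℝ)+1/2) := by
    field_simp
  rw [e, gt_iff_lt, lt_div_iff₀ hhalf]
  have h2 := mul_lt_mul_of_pos_left h hc
  nlinarith [h2]

lemma core_all {n a : ℕ} (hn : 4 ≤ n) (ha1 : 1 ≤ a) (han : a ≤ n) :
    2*π*((n:ℝ)+1-(a:ℝ))*((n:ℝ)+1+(a:ℝ)) * |I n a| ≤ (2*(n:ℝ)+2) * |I (n+1) a| := by
  rcases Nat.lt_or_ge a 2 with h|h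
  · have h1 : a = 1 := by omega
    subst h1
    have := le_of_lt (core1 (by omega : 3 ≤ n))
    rw [Nat.cast_one]
    exact this
  · obtain ⟨b, rfl⟩ : ∃ b, a = b + 2 := ⟨a - 2, by omega⟩
    have := core2 (b := b) hn (by omega)
    have hc : ((b+2:ℕ):ℝ) = (b:ℝ)+2 := by push_cast; ring
    rw [hc]
    exact this

lemma cast_bin {n j : ℕ} (hj : j < n) :
    ((2*(n+1)).choose (j+1) : ℝ) * (((j:ℝ)+1)*(2*(n:ℝ)+1-(j:ℝ))) =
    (2*(n:ℝ)+2)*(2*(n:ℝ)+1)*((2*n).choose j : ℝ) := by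
  have e2 : 2*(n+1) = (2*n+1)+1 := by omega
  rw [e2]
  have h1R : (2*(n:ℝ)+2) * ((2*n+1).choose j : ℝ) = (((2*n+1)+1).choose (j+1) : ℝ) * ((j:ℝ)+1) := by
    have hc := congrArg (Nat.cast : ℕ → ℝ) (Nat.add_one_mul_choose_eq (2*n+1) j)
    push_cast at hc
    linarith [hc]
  have h2R : ((2*n).choose j : ℝ) * (2*(n:ℝ)+1) = ((2*n+1).choose j : ℝ) * (2*(n:ℝ)+1-(j:ℝ)) := by
    have hc := congrArg (Nat.cast : ℕ → ℝ) (Nat.choose_mul_succ_eq (2*n) j)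
    have hj2 : j ≤ 2*n + 1 := by omega
    push_cast [Nat.cast_sub hj2] at hc
    linarith [hc]
  linear_combination (-(2*(n:ℝ)+1-(j:ℝ))) * h1R + (-(2*(n:ℝ)+2)) * h2R

lemma termwise_le {n j : ℕ} (hn : 4 ≤ n) (hj : j < n) :
    2*π*(2*(n:ℝ)+1) * (((2*n).choose j : ℝ) * |I n (n-j)|) ≤
    ((2*(n+1)).choose (j+1) : ℝ) * |I (n+1) (n+1-(j+1))| := by
  have e : n+1-(j+1) = n-j := by omega
  rw [e]
  have han : n - j ≤ n := by omega
  have ha1 : 1 ≤ n - j := by omega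
  have hjcast : (j:ℝ) = (n:ℝ) - ((n-j : ℕ):ℝ) := by
    rw [Nat.cast_sub (by omega : j ≤ n)]; ring
  have hjn : (j:ℝ) ≤ (n:ℝ) - 1 := by
    have : j + 1 ≤ n := hj
    have := (Nat.cast_le (α := ℝ)).2 this
    push_cast at this; linarith
  have hj0 : (0:ℝ) ≤ (j:ℝ) := j.cast_nonneg
  have hpos : (0:ℝ) < ((j:ℝ)+1)*(2*(n:ℝ)+1-(j:ℝ)) := by nlinarith
  apply le_of_mul_le_mul_left _ hpos
  have hMe : ((j:ℝ)+1)*(2*(n:ℝ)+1-(j:ℝ)) =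
      ((n:ℝ)+1-((n-j:ℕ):ℝ))*((n:ℝ)+1+((n-j:ℕ):ℝ)) := by
    rw [hjcast]; ring
  have hbin := cast_bin hj
  have hbinA : ((2*(n+1)).choose (j+1) : ℝ) * (((n:ℝ)+1-((n-j:ℕ):ℝ))*((n:ℝ)+1+((n-j:ℕ):ℝ))) =
      (2*(n:ℝ)+2)*(2*(n:ℝ)+1)*((2*n).choose j : ℝ) := by rw [← hMe]; exact hbin
  have hbinA2 : ((2*(n+1)).choose (j+1) : ℝ) * (((n:ℝ)+1-((n-j:ℕ):ℝ))*((n:ℝ)+1+((n-j:ℕ):ℝ)))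
      * |I (n+1) (n-j)| = (2*(n:ℝ)+2)*(2*(n:ℝ)+1)*((2*n).choose j : ℝ) * |I (n+1) (n-j)| := by
    linear_combination |I (n+1) (n-j)| * hbinA
  have hcc : (0:ℝ) ≤ (2*(n:ℝ)+1) * ((2*n).choose j : ℝ) := by positivity
  have H := mul_le_mul_of_nonneg_left (core_all hn ha1 han) hcc
  rw [hMe]
  linarith [H, hbinA2]

lemma termwise_lt {n : ℕ} (hn : 4 ≤ n) :
    2*π*(2*(n:ℝ)+1) * (((2*n).choose (n-1) : ℝ) * |I n (n-(n-1))|) <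
    ((2*(n+1)).choose ((n-1)+1) : ℝ) * |I (n+1) (n+1-((n-1)+1))| := by
  have e1 : n-(n-1) = 1 := by omega
  have e2 : n+1-((n-1)+1) = 1 := by omega
  rw [e1, e2]
  have hjcast : ((n-1:ℕ):ℝ) = (n:ℝ) - 1 := by
    rw [Nat.cast_sub (by omega : 1 ≤ n)]; norm_num
  have hn4 : (4:ℝ) ≤ (n:ℝ) := by exact_mod_cast Nat.cast_le.2 hn
  have hpos : (0:ℝ) < (((n-1:ℕ):ℝ)+1)*(2*(n:ℝ)+1-((n-1:ℕ):ℝ)) := by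
    rw [hjcast]; nlinarith
  apply lt_of_mul_lt_mul_left _ hpos.le
  have hMe : (((n-1:ℕ):ℝ)+1)*(2*(n:ℝ)+1-((n-1:ℕ):ℝ)) = ((n:ℝ)+1-1)*((n:ℝ)+1+1) := by
    rw [hjcast]; ring
  have hbin := cast_bin (n := n) (j := n-1) (by omega)
  have hbinA : ((2*(n+1)).choose ((n-1)+1) : ℝ) * (((n:ℝ)+1-1)*((n:ℝ)+1+1)) =
      (2*(n:ℝ)+2)*(2*(n:ℝ)+1)*((2*n).choose (n-1) : ℝ) := by rw [← hMe]; exact hbin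
  have hbinA2 : ((2*(n+1)).choose ((n-1)+1) : ℝ) * (((n:ℝ)+1-1)*((n:ℝ)+1+1)) * |I (n+1) 1| =
      (2*(n:ℝ)+2)*(2*(n:ℝ)+1)*((2*n).choose (n-1) : ℝ) * |I (n+1) 1| := by
    linear_combination |I (n+1) 1| * hbinA
  have hcpos : (0:ℝ) < (2*(n:ℝ)+1) * ((2*n).choose (n-1) : ℝ) := by
    apply mul_pos (by linarith)
    exact_mod_cast Nat.cast_pos.2 (Nat.choose_pos (by omega : n-1 ≤ 2*n))
  have H := mul_lt_mul_of_pos_left (core1 (by omega : 3 ≤ n)) hcpos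
  rw [hMe]
  linarith [H, hbinA2]

lemma sum_lt {n : ℕ} (hn : 4 ≤ n) :
    2*π*(2*(n:ℝ)+1) * (∑ j ∈ Finset.range n, ((2*n).choose j : ℝ) * |I n (n-j)|) <
    ∑ j ∈ Finset.range (n+1), ((2*(n+1)).choose j : ℝ) * |I (n+1) (n+1-j)| := by
  rw [Finset.sum_range_succ', Finset.mul_sum]
  have hlt : ∑ j ∈ Finset.range n, 2*π*(2*(n:ℝ)+1) * (((2*n).choose j : ℝ) * |I n (n-j)|)
      < ∑ j ∈ Finset.range n, ((2*(n+1)).choose (j+1) : ℝ) * |I (n+1) (n+1-(j+1))| :=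
    Finset.sum_lt_sum (fun j hj => termwise_le hn (Finset.mem_range.1 hj))
      ⟨n-1, Finset.mem_range.2 (by omega), termwise_lt hn⟩
  have h0 : 0 ≤ ((2*(n+1)).choose 0 : ℝ) * |I (n+1) (n+1-0)| := by positivity
  linarith


lemma absI_1_1 : |I 1 1| = 1/3 := by rw [Ival_1_1, abs_of_nonpos] <;> norm_num
lemma absI_2_1 : |I 2 1| = 17/15 := by rw [Ival_2_1, abs_of_nonpos] <;> norm_num
lemma absI_2_2 : |I 2 2| = 56/15 := by rw [Ival_2_2, abs_of_nonneg] <;> norm_num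
lemma absI_3_1 : |I 3 1| = 334/35 := by rw [Ival_3_1, abs_of_nonpos] <;> norm_num
lemma absI_3_2 : |I 3 2| = 152/7 := by rw [Ival_3_2, abs_of_nonneg] <;> norm_num
lemma absI_3_3 : |I 3 3| = 738/7 := by rw [Ival_3_3, abs_of_nonpos] <;> norm_num
lemma absI_4_1 : |I 4 1| = 46378/315 := by rw [Ival_4_1, abs_of_nonpos] <;> norm_num
lemma absI_4_2 : |I 4 2| = 87904/315 := by rw [Ival_4_2, abs_of_nonneg] <;> norm_num
lemma absI_4_3 : |I 4 3| = 4338/5 := by rw [Ival_4_3, abs_of_nonpos] <;> norm_num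
lemma absI_4_4 : |I 4 4| = 253184/45 := by rw [Ival_4_4, abs_of_nonneg] <;> norm_num

lemma small1 :
    2*π*(2*((1:ℕ):ℝ)+1) * (∑ j ∈ Finset.range 1, ((2*1).choose j : ℝ) * |I 1 (1-j)|) <
    ∑ j ∈ Finset.range (1+1), ((2*(1+1)).choose j : ℝ) * |I (1+1) (1+1-j)| := by
  norm_num [Finset.sum_range_succ, absI_1_1, absI_2_1, absI_2_2]
  nlinarith [pi_lt_d2, pi_pos]

lemma small2 :
    2*π*(2*((2:ℕ):ℝ)+1) * (∑ j ∈ Finset.range 2, ((2*2).choose j : ℝ) * |I 2 (2-j)|) <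
    ∑ j ∈ Finset.range (2+1), ((2*(2+1)).choose j : ℝ) * |I (2+1) (2+1-j)| := by
  norm_num [Finset.sum_range_succ, Nat.choose, absI_2_1, absI_2_2, absI_3_1, absI_3_2, absI_3_3]
  nlinarith [pi_lt_d2, pi_pos]

lemma small3 :
    2*π*(2*((3:ℕ):ℝ)+1) * (∑ j ∈ Finset.range 3, ((2*3).choose j : ℝ) * |I 3 (3-j)|) <
    ∑ j ∈ Finset.range (3+1), ((2*(3+1)).choose j : ℝ) * |I (3+1) (3+1-j)| := by
  norm_num [Finset.sum_range_succ, Nat.choose, absI_3_1, absI_3_2, absI_3_3,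
    absI_4_1, absI_4_2, absI_4_3, absI_4_4]
  nlinarith [pi_lt_d2, pi_pos]


theorem alpha_strictMono (n : ℕ) (hn : 1 ≤ n) : α (n+1) > α n := by
  apply alpha_step
  rcases Nat.lt_or_ge n 4 with h|h
  · interval_cases n
    · exact small1
    · exact small2
    · exact small3
  · exact sum_lt h
end

section
/- For all integers n ≥ 1, 1 ≤ a ≤ n, and r with 0 ≤ r and r+1 ≤ a−1, one has ∫₀^1 |f_{n,a,r+1}(t)| dt > ∫₀^1 |f_{n,a,r}(t)| dt > 0; that is, the absolute values of the integrals ∫₀^1 f_{n,a,r}(t) dt are strictly increasing in r and nonzero. -/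
open Real

noncomputable def g (n a r : ℕ) (t : ℝ) : ℝ :=
  -(t + r) * ∏ k ∈ ((Finset.range (2*n+1)).erase (n+a)).erase (n-a), (t + ((k:ℝ) - n + r))

lemma f_eq_g (n a r : ℕ) (ha1 : 1 ≤ a) (han : a ≤ n) (t : ℝ)
    (h1 : (a:ℝ) + t + r ≠ 0) (h2 : (a:ℝ) - t - r ≠ 0) : f n a r t = g n a r t := by
  unfold f g
  have hmem1 : n + a ∈ Finset.range (2*n+1) := by
    simp only [Finset.mem_range]; omega
  have hmem2 : n - a ∈ (Finset.range (2*n+1)).erase (n+a) := by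
    simp only [Finset.mem_erase, Finset.mem_range]; omega
  rw [← Finset.mul_prod_erase _ _ hmem1, ← Finset.mul_prod_erase _ _ hmem2]
  have e1 : (t + (((n+a:ℕ):ℝ) - n + r)) = (a:ℝ) + t + r := by push_cast; ring
  have e2 : (t + (((n-a:ℕ):ℝ) - n + r)) = -((a:ℝ) - t - r) := by
    rw [Nat.cast_sub han]; ring
  rw [e1, e2]
  field_simp

lemma prod_shift (n r : ℕ) (t : ℝ) :
    (∏ k ∈ Finset.range (2*n+1), (t + ((k:ℝ) - n + ((r:ℝ)+1)))) * (t - n + r) =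
    (∏ k ∈ Finset.range (2*n+1), (t + ((k:ℝ) - n + r))) * (t + n + r + 1) := by
  have h := Finset.prod_range_succ' (fun k : ℕ => t + ((k:ℝ) - n + r)) (2*n+1)
  have h' := Finset.prod_range_succ (fun k : ℕ => t + ((k:ℝ) - n + r)) (2*n+1)
  have e : (∏ k ∈ Finset.range (2*n+1), (t + ((k:ℝ) - n + ((r:ℝ)+1)))) =
      ∏ k ∈ Finset.range (2*n+1), (t + (((k+1:ℕ):ℝ) - n + r)) := by
    apply Finset.prod_congr rfl
    intro k _
    push_cast
    ring
  rw [e, show (t - (n:ℝ) + r) = t + (((0:ℕ):ℝ) - n + r) by push_cast; ring, ← h, h']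
  push_cast; ring

set_option maxRecDepth 4000 in
lemma key (n a r : ℕ) (t : ℝ) (h1 : (a:ℝ) + t + r ≠ 0) (h2 : (a:ℝ) - t - r ≠ 0)
    (h3 : (a:ℝ) + t + r + 1 ≠ 0) (h4 : (a:ℝ) - t - r - 1 ≠ 0) :
    f n a (r+1) t * ((t + r) * (((a:ℝ) + t + r + 1) * ((a:ℝ) - t - r - 1)) * (t - n + r)) =
    f n a r t * ((t + r + 1) * (((a:ℝ) + t + r) * ((a:ℝ) - t - r)) * (t + n + r + 1)) := by
  have hp := prod_shift n r t
  unfold f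
  have ec : ∀ k : ℕ, t + ((k:ℝ) - n + ((r+1:ℕ):ℝ)) = t + ((k:ℝ) - n + ((r:ℝ)+1)) := by
    intro k; push_cast; ring
  rw [Finset.prod_congr rfl (fun k _ => ec k)]
  push_cast
  set P1 := ∏ k ∈ Finset.range (2*n+1), (t + ((k:ℝ) - n + ((r:ℝ)+1))) with hP1
  set P0 := ∏ k ∈ Finset.range (2*n+1), (t + ((k:ℝ) - n + (r:ℝ))) with hP0
  clear_value P1 P0
  rw [div_mul_eq_mul_div, div_mul_eq_mul_div, div_mul_eq_mul_div, div_mul_eq_mul_div,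
    div_eq_div_iff (mul_ne_zero (fun h => h3 (by linarith)) (fun h => h4 (by linarith))) (mul_ne_zero h1 h2)]
  linear_combination ((t + r + 1) * (t + r) * (((a:ℝ) + t + r) * ((a:ℝ) - t - r)) * (((a:ℝ) + t + r + 1) * ((a:ℝ) - t - r - 1))) * hp

lemma g_cont (n a r : ℕ) : Continuous (g n a r) := by
  unfold g
  exact ((continuous_id.add continuous_const).neg).mul
    (continuous_finset_prod _ fun k _ => continuous_id.add continuous_const)

lemma f_ne_zero (n a r : ℕ) (t : ℝ) (ht0 : 0 < t) (ht1 : t < 1)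
    (hpos : 0 < ((a:ℝ) + t + r) * ((a:ℝ) - t - r)) : f n a r t ≠ 0 := by
  unfold f
  apply mul_ne_zero
  · exact div_ne_zero (by positivity) hpos.ne'
  · rw [Finset.prod_ne_zero_iff]
    intro k _
    rcases le_or_gt n (k + r) with h | h
    · have h' : (n:ℝ) ≤ (k:ℝ) + r := by exact_mod_cast h
      have : 0 < t + ((k:ℝ) - n + r) := by linarith
      exact this.ne'
    · have h' : (k:ℝ) + r + 1 ≤ (n:ℝ) := by exact_mod_cast h
      have : t + ((k:ℝ) - n + r) < 0 := by linarith
      exact this.ne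

lemma ae_ne_one : ∀ᵐ x : ℝ, x ≠ (1:ℝ) := by
  refine MeasureTheory.ae_iff.mpr ?_
  have : {x : ℝ | ¬ x ≠ 1} = {1} := by ext x; simp
  rw [this]
  exact Real.volume_singleton

lemma int_eq (n a r : ℕ) (ha1 : 1 ≤ a) (han : a ≤ n) (hra : (r:ℝ) + 1 ≤ (a:ℝ)) :
    (∫ t in (0:ℝ)..1, |f n a r t|) = ∫ t in (0:ℝ)..1, |g n a r t| := by
  apply intervalIntegral.integral_congr_ae
  filter_upwards [ae_ne_one] with x hx hmem
  rw [Set.uIoc_of_le (by norm_num : (0:ℝ) ≤ 1)] at hmem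
  have hx0 : 0 < x := hmem.1
  have hx1 : x < 1 := lt_of_le_of_ne hmem.2 hx
  rw [f_eq_g n a r ha1 han x (by positivity) (by
    have : (0:ℝ) < (a:ℝ) - x - r := by linarith
    exact this.ne')]

theorem integral_abs_f_strict_increasing (n a r : ℕ) (hn : 1 ≤ n) (ha1 : 1 ≤ a)
    (han : a ≤ n) (hr : r + 1 ≤ a - 1) :
    (∫ t in (0:ℝ)..1, |f n a (r+1) t|) > (∫ t in (0:ℝ)..1, |f n a r t|) ∧
      (∫ t in (0:ℝ)..1, |f n a r t|) > 0 := by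
  have hra2 : r + 2 ≤ a := by omega
  have hA2 : (r:ℝ) + 2 ≤ (a:ℝ) := by exact_mod_cast hra2
  have hAN : (a:ℝ) ≤ (n:ℝ) := by exact_mod_cast han
  -- pointwise facts on Ioo 0 1
  have hpt : ∀ x ∈ Set.Ioo (0:ℝ) 1, 0 < |g n a r x| ∧ |g n a r x| < |g n a (r+1) x| := by
    intro x hx
    obtain ⟨hx0, hx1⟩ := hx
    have p1 : (0:ℝ) < x + r := by positivity
    have p2 : (0:ℝ) < (a:ℝ) + x + r := by positivity
    have p3 : (0:ℝ) < (a:ℝ) - x - r := by linarith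
    have p4 : (0:ℝ) < (a:ℝ) + x + r + 1 := by linarith
    have p5 : (0:ℝ) < (a:ℝ) - x - r - 1 := by linarith
    have p6 : (0:ℝ) < x + n + r + 1 := by positivity
    have p7 : x - n + r < 0 := by linarith
    have hf0 : f n a r x ≠ 0 := f_ne_zero n a r x hx0 hx1 (by positivity)
    have hf1 : f n a (r+1) x ≠ 0 := by
      apply f_ne_zero n a (r+1) x hx0 hx1
      have c1 : (0:ℝ) < (a:ℝ) + x + ((r+1:ℕ):ℝ) := by push_cast; linarith
      have c2 : (0:ℝ) < (a:ℝ) - x - ((r+1:ℕ):ℝ) := by push_cast; linarith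
      positivity
    have hgeq0 : f n a r x = g n a r x := f_eq_g n a r ha1 han x p2.ne' p3.ne'
    have hgeq1 : f n a (r+1) x = g n a (r+1) x := by
      apply f_eq_g n a (r+1) ha1 han x
      · push_cast; intro h; linarith
      · push_cast; intro h; linarith
    have hkey := key n a r x p2.ne' p3.ne' p4.ne' p5.ne'
    -- abs of both sides
    have habs : |f n a (r+1) x| * ((x + r) * (((a:ℝ)+x+r+1) * ((a:ℝ)-x-r-1)) * ((n:ℝ) - x - r)) =
        |f n a r x| * ((x + r + 1) * (((a:ℝ)+x+r) * ((a:ℝ)-x-r)) * (x + n + r + 1)) := by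
      have e1 : (x + (r:ℝ)) * (((a:ℝ)+x+r+1) * ((a:ℝ)-x-r-1)) * ((n:ℝ) - x - r) =
          |(x + (r:ℝ)) * (((a:ℝ)+x+r+1) * ((a:ℝ)-x-r-1)) * (x - n + r)| := by
        rw [abs_mul, abs_mul, abs_of_pos p1, abs_of_pos (by positivity), abs_of_neg p7]
        ring
      have e2 : (x + (r:ℝ) + 1) * (((a:ℝ)+x+r) * ((a:ℝ)-x-r)) * (x + n + r + 1) =
          |(x + (r:ℝ) + 1) * (((a:ℝ)+x+r) * ((a:ℝ)-x-r)) * (x + n + r + 1)| := by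
        rw [abs_of_pos (by positivity)]
      rw [e1, e2, ← abs_mul, ← abs_mul, hkey]
    have hDpos : (0:ℝ) < (x + r) * (((a:ℝ)+x+r+1) * ((a:ℝ)-x-r-1)) * ((n:ℝ) - x - r) := by
      have : (0:ℝ) < (n:ℝ) - x - r := by linarith
      positivity
    have hDN : (x + (r:ℝ)) * (((a:ℝ)+x+r+1) * ((a:ℝ)-x-r-1)) * ((n:ℝ) - x - r) <
        (x + (r:ℝ) + 1) * (((a:ℝ)+x+r) * ((a:ℝ)-x-r)) * (x + n + r + 1) := by
      have c2 : ((a:ℝ)+x+r+1) * ((a:ℝ)-x-r-1) < ((a:ℝ)+x+r) * ((a:ℝ)-x-r) := by nlinarith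
      have c3 : (n:ℝ) - x - r < x + n + r + 1 := by linarith
      have step := mul_lt_mul'' (mul_lt_mul'' (by linarith : x + (r:ℝ) < x + r + 1) c2
        p1.le (by positivity)) c3 (by positivity) (by linarith)
      exact step
    have hgr : 0 < |g n a r x| := by rw [← hgeq0]; exact abs_pos.mpr hf0
    refine ⟨hgr, ?_⟩
    rw [← hgeq0, ← hgeq1]
    have h5 : |f n a r x| * ((x + r) * (((a:ℝ)+x+r+1) * ((a:ℝ)-x-r-1)) * ((n:ℝ) - x - r)) <
        |f n a r x| * ((x + r + 1) * (((a:ℝ)+x+r) * ((a:ℝ)-x-r)) * (x + n + r + 1)) :=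
      mul_lt_mul_of_pos_left hDN (abs_pos.mpr hf0)
    rw [← habs] at h5
    exact lt_of_mul_lt_mul_right h5 hDpos.le
  -- integrals
  have hint0 : IntervalIntegrable (fun t => |g n a r t|) MeasureTheory.volume 0 1 :=
    ((g_cont n a r).abs).intervalIntegrable 0 1
  have hint1 : IntervalIntegrable (fun t => |g n a (r+1) t|) MeasureTheory.volume 0 1 :=
    ((g_cont n a (r+1)).abs).intervalIntegrable 0 1
  have he0 : (∫ t in (0:ℝ)..1, |f n a r t|) = ∫ t in (0:ℝ)..1, |g n a r t| :=
    int_eq n a r ha1 han (by linarith)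
  have he1 : (∫ t in (0:ℝ)..1, |f n a (r+1) t|) = ∫ t in (0:ℝ)..1, |g n a (r+1) t| :=
    int_eq n a (r+1) ha1 han (by push_cast; linarith)
  have hpos : (0:ℝ) < ∫ t in (0:ℝ)..1, |g n a r t| := by
    apply intervalIntegral.intervalIntegral_pos_of_pos_on hint0 (fun x hx => (hpt x hx).1)
    norm_num
  have hdiff : (0:ℝ) < ∫ t in (0:ℝ)..1, (|g n a (r+1) t| - |g n a r t|) := by
    apply intervalIntegral.intervalIntegral_pos_of_pos_on (hint1.sub hint0)
      (fun x hx => sub_pos.mpr (hpt x hx).2)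
    norm_num
  rw [intervalIntegral.integral_sub hint1 hint0] at hdiff
  constructor
  · rw [he0, he1]; linarith
  · rw [he0]; exact hpos
end
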